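/- arXiv:0707.2117 — 4 statements merged into one kernel-verified Lean document; each statement's English description precedes it below -/
import Mathlib

section
/- Let G be a finite simple graph such that for every set X of vertices with |X| ≤ m, the open neighborhood satisfies |∂X| > 2|X|. Then G contains a path of length 3m (i.e., a path with 3m edges). -/
/-!
Take a longest path `p` starting at `a` and let `S` be the set of endpoints of the paths obtained
from `p` by Pósa rotations fixing `a`. All these paths are longest paths, so every neighbour of `S`
lies on `p`. A vertex `v ∉ S` that is not a `p`-neighbour of `S` keeps its `p`-neighbours through
every rotation; were it adjacent to some `s ∈ S`, rotating the path ending at `s` at `v` would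
produce a new endpoint among those neighbours. Hence `∂S` lies in the `p`-neighbourhood of `S`,
so `|∂S| ≤ 2|S|`, which forces `|S| > m`. Any `T ⊆ S` with `|T| = m` then has
`|T ∪ ∂T| ≥ 3m + 1`, and `T ∪ ∂T` lies on `p`.
-/

open Finset

namespace SimpleGraph

variable {V : Type*} {G : SimpleGraph V}

def vertexBoundary [Fintype V] [DecidableEq V] (G : SimpleGraph V) [DecidableRel G.Adj]
    (X : Finset V) : Finset V :=
  univ.filter fun y => y ∉ X ∧ ∃ x ∈ X, G.Adj x y

lemma disjoint_vertexBoundary [Fintype V] [DecidableEq V] [DecidableRel G.Adj] (X : Finset V) :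
    Disjoint X (G.vertexBoundary X) :=
  disjoint_right.2 fun _ hy => (mem_filter.1 hy).2.1

namespace Walk

variable {a b c u v w : V}

lemma IsPath.ncard_setOf_mk_mem_edges_le_two {p : G.Walk a b} (hp : p.IsPath) (v : V) :
    {w | s(v, w) ∈ p.edges}.ncard ≤ 2 := by
  by_cases hv : v ∈ p.support
  · obtain ⟨i, rfl, hi⟩ := mem_support_iff_exists_getVert.1 hv
    have hsub : {w | s(p.getVert i, w) ∈ p.edges} ⊆ {p.getVert (i - 1), p.getVert (i + 1)} := by
      intro w hw
      obtain ⟨j, hj, he⟩ := (mk_mem_edges_iff_exists p).1 hw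
      have hinj := hp.getVert_injOn
      rcases Sym2.eq_iff.1 he with ⟨hji, rfl⟩ | ⟨rfl, hji⟩
      · have : j = i := hinj (by simp only [Set.mem_ofPred_eq]; omega) (by simpa using hi) hji
        simp [this]
      · have : j + 1 = i := hinj (by simp only [Set.mem_ofPred_eq]; omega) (by simpa using hi) hji
        simp [← this]
    calc _ ≤ ({p.getVert (i - 1), p.getVert (i + 1)} : Set V).ncard := Set.ncard_le_ncard hsub
      _ ≤ 2 := (Set.ncard_insert_le _ _).trans (by simp)
  · have : {w | s(v, w) ∈ p.edges} = ∅ :=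
      Set.eq_empty_of_forall_notMem fun w hw => hv (p.fst_mem_support_of_mem_edges hw)
    simp [this]

lemma IsPath.card_le_length_add_one [DecidableEq V] {p : G.Walk a b} (hp : p.IsPath)
    {X : Finset V} (hX : ∀ x ∈ X, x ∈ p.support) : #X ≤ p.length + 1 :=
  calc #X ≤ #p.support.toFinset := card_le_card fun x hx => List.mem_toFinset.2 (hX x hx)
    _ = p.length + 1 := by rw [List.toFinset_card_of_nodup hp.support_nodup, length_support]

def IsLongestPath (p : G.Walk a b) : Prop :=
  p.IsPath ∧ ∀ ⦃u v : V⦄ (q : G.Walk u v), q.IsPath → q.length ≤ p.length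

lemma exists_isLongestPath [Fintype V] [Nonempty V] (G : SimpleGraph V) :
    ∃ (a b : V) (p : G.Walk a b), p.IsLongestPath := by
  classical
  let HasPath (n : ℕ) : Prop := ∃ (a b : V) (p : G.Walk a b), p.IsPath ∧ p.length = n
  have hnil : HasPath 0 := ⟨Classical.arbitrary V, _, nil, by simp, rfl⟩
  obtain ⟨a, b, p, hp, hlen⟩ := Nat.findGreatest_spec (Nat.zero_le (Fintype.card V)) hnil
  exact ⟨a, b, p, hp, fun u v q hq =>
    hlen ▸ Nat.le_findGreatest hq.length_lt.le ⟨u, v, q, hq, rfl⟩⟩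

lemma IsLongestPath.mem_support_of_adj {p : G.Walk a b} (hp : p.IsLongestPath) (h : G.Adj b w) :
    w ∈ p.support := by
  by_contra hw
  have := hp.2 (p.concat h) (hp.1.concat hw h)
  simp at this

lemma exists_eq_append_cons_of_mem_support {p : G.Walk a b} (hv : v ∈ p.support)
    (hvb : v ≠ b) :
    ∃ (w : V) (q : G.Walk a v) (h : G.Adj v w) (r : G.Walk w b), p = q.append (cons h r) := by
  obtain ⟨q, r, rfl⟩ := mem_support_iff_exists_append.1 hv
  cases r with
  | nil => exact absurd rfl hvb
  | cons h r => exact ⟨_, q, h, r, rfl⟩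

lemma mk_mem_edges_append_cons_reverse_iff {q : G.Walk a u} (huw : G.Adj u w)
    (huc : G.Adj u c) (r : G.Walk w c) {z : V} (hu : v ≠ u) (hw : v ≠ w) (hc : v ≠ c) :
    s(v, z) ∈ (q.append (cons huc r.reverse)).edges ↔
      s(v, z) ∈ (q.append (cons huw r)).edges := by
  simp [edges_append, hu, hw, hc]

/-- `q` arises from `p` by Pósa rotations fixing the start `a`: one rotation turns
`a ⋯ u w ⋯ c`, whose endpoint `c` is adjacent to `u`, into `a ⋯ u c ⋯ w`. -/
inductive PosaRotated (p : G.Walk a b) : {c : V} → G.Walk a c → Prop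
  | refl : PosaRotated p p
  | rotate {u w c : V} {q : G.Walk a u} {huw : G.Adj u w} {r : G.Walk w c} (huc : G.Adj u c) :
      PosaRotated p (q.append (cons huw r)) → PosaRotated p (q.append (cons huc r.reverse))

namespace PosaRotated

variable {p : G.Walk a b} {q : G.Walk a c}

lemma length_eq (h : p.PosaRotated q) : q.length = p.length := by
  induction h with
  | refl => rfl
  | rotate _ _ ih => simpa [length_append] using ih

lemma support_perm (h : p.PosaRotated q) : q.support.Perm p.support := by
  induction h with
  | refl => rfl
  | rotate _ _ ih =>
    refine List.Perm.trans ?_ ih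
    simpa [support_append] using (List.reverse_perm _).append_left _

lemma isLongestPath (hp : p.IsLongestPath) (h : p.PosaRotated q) : q.IsLongestPath :=
  ⟨(isPath_def _).2 (h.support_perm.nodup_iff.2 ((isPath_def _).1 hp.1)),
    h.length_eq ▸ hp.2⟩

end PosaRotated

open Classical in
noncomputable def posaEndpoints [Fintype V] (p : G.Walk a b) : Finset V :=
  univ.filter fun c => ∃ q : G.Walk a c, p.PosaRotated q

section posaEndpoints

variable [Fintype V] {p : G.Walk a b}

lemma mem_posaEndpoints : c ∈ p.posaEndpoints ↔ ∃ q : G.Walk a c, p.PosaRotated q := by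
  simp [posaEndpoints]

lemma PosaRotated.mem_posaEndpoints {q : G.Walk a c} (h : p.PosaRotated q) :
    c ∈ p.posaEndpoints :=
  Walk.mem_posaEndpoints.2 ⟨q, h⟩

lemma PosaRotated.mk_mem_edges_iff {q : G.Walk a c} (h : p.PosaRotated q)
    (hv : v ∉ p.posaEndpoints) (hvS : ∀ s ∈ p.posaEndpoints, s(v, s) ∉ p.edges) (z : V) :
    s(v, z) ∈ q.edges ↔ s(v, z) ∈ p.edges := by
  induction h generalizing z with
  | refl => rfl
  | @rotate u w c q huw r huc h ih =>
    have hvu : v ≠ u := by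
      rintro rfl
      exact hvS w (h.rotate huc).mem_posaEndpoints ((ih w).1 (by simp [edges_append]))
    have hvw : v ≠ w := by rintro rfl; exact hv (h.rotate huc).mem_posaEndpoints
    have hvc : v ≠ c := by rintro rfl; exact hv h.mem_posaEndpoints
    rw [mk_mem_edges_append_cons_reverse_iff huw huc r hvu hvw hvc, ih]

lemma IsLongestPath.mem_support_of_adj_of_mem_posaEndpoints {s : V} (hp : p.IsLongestPath)
    (hs : s ∈ p.posaEndpoints) (h : G.Adj s v) : v ∈ p.support := by
  obtain ⟨q, hq⟩ := mem_posaEndpoints.1 hs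
  exact hq.support_perm.subset ((hq.isLongestPath hp).mem_support_of_adj h)

lemma IsLongestPath.exists_mk_mem_edges_of_adj {s : V} (hp : p.IsLongestPath)
    (hs : s ∈ p.posaEndpoints) (hv : v ∉ p.posaEndpoints) (h : G.Adj s v) :
    ∃ s' ∈ p.posaEndpoints, s(v, s') ∈ p.edges := by
  obtain ⟨q, hq⟩ := mem_posaEndpoints.1 hs
  obtain ⟨w, q, hvw, r, rfl⟩ := exists_eq_append_cons_of_mem_support
    ((hq.isLongestPath hp).mem_support_of_adj h) (by rintro rfl; exact hv hs)
  by_contra! hvS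
  exact hvS w (hq.rotate h.symm).mem_posaEndpoints
    ((hq.mk_mem_edges_iff hv hvS w).1 (by simp [edges_append]))

lemma IsLongestPath.card_vertexBoundary_posaEndpoints_le [DecidableEq V] [DecidableRel G.Adj]
    (hp : p.IsLongestPath) : #(G.vertexBoundary p.posaEndpoints) ≤ 2 * #p.posaEndpoints := by
  classical
  set S := p.posaEndpoints
  have hsub : G.vertexBoundary S ⊆ S.biUnion fun s => {w | s(s, w) ∈ p.edges}.toFinset := by
    intro v hv
    obtain ⟨-, hvS, s, hs, hsv⟩ := mem_filter.1 hv
    obtain ⟨s', hs', he⟩ := hp.exists_mk_mem_edges_of_adj hs hvS hsv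
    exact mem_biUnion.2 ⟨s', hs', by simpa [Sym2.eq_swap] using he⟩
  calc #(G.vertexBoundary S) ≤ _ := card_le_card hsub
    _ ≤ #S * 2 := card_biUnion_le_card_mul _ _ _ fun s _ => by
        rw [← Set.ncard_eq_toFinset_card']; exact hp.1.ncard_setOf_mk_mem_edges_le_two s
    _ = 2 * #S := mul_comm _ _

lemma IsLongestPath.card_add_card_vertexBoundary_le [DecidableEq V] [DecidableRel G.Adj]
    (hp : p.IsLongestPath) {T : Finset V} (hT : T ⊆ p.posaEndpoints) :
    #T + #(G.vertexBoundary T) ≤ p.length + 1 := by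
  rw [← card_union_of_disjoint (disjoint_vertexBoundary T)]
  refine hp.1.card_le_length_add_one fun x hx => ?_
  rcases mem_union.1 hx with hx | hx
  · obtain ⟨q, hq⟩ := mem_posaEndpoints.1 (hT hx)
    exact hq.support_perm.subset q.end_mem_support
  · obtain ⟨-, -, s, hs, hsx⟩ := mem_filter.1 hx
    exact hp.mem_support_of_adj_of_mem_posaEndpoints (hT hs) hsx

end posaEndpoints

end Walk
end SimpleGraph

open SimpleGraph Walk Finset

/-- Pósa's lemma: if every nonempty set `X` of at most `m` vertices satisfies
`|∂X| > 2|X|`, then `G` contains a path of length `3m`. -/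
theorem posa_lemma {V : Type*} [Fintype V] [DecidableEq V] [Nonempty V]
    (G : SimpleGraph V) [DecidableRel G.Adj] (m : ℕ)
    (h : ∀ X : Finset V, X.Nonempty → X.card ≤ m →
      2 * X.card < (Finset.univ.filter fun y => y ∉ X ∧ ∃ x ∈ X, G.Adj x y).card) :
    ∃ (u v : V) (p : G.Walk u v), p.IsPath ∧ p.length = 3 * m := by
  have hexp : ∀ X : Finset V, X.Nonempty → #X ≤ m → 2 * #X < #(G.vertexBoundary X) := h
  obtain ⟨a, b, p, hp⟩ := exists_isLongestPath G
  have hS : m < #p.posaEndpoints := by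
    by_contra! hle
    have := hexp _ ⟨b, PosaRotated.refl.mem_posaEndpoints⟩ hle
    have := hp.card_vertexBoundary_posaEndpoints_le
    omega
  have hlen : 3 * m ≤ p.length := by
    rcases Nat.eq_zero_or_pos m with rfl | hm
    · simp
    obtain ⟨T, hTS, hT⟩ := exists_subset_card_eq hS.le
    have := hexp T (card_pos.1 (hT ▸ hm)) hT.le
    have := hp.card_add_card_vertexBoundary_le hTS
    omega
  exact ⟨a, _, p.take (3 * m), hp.1.take _, by simp [take_length, hlen]⟩
end

section
/- Let H be a graph that is vertex-critical with chromatic number d ≥ 3 (i.e., χ(H) = d and deleting any vertex lowers the chromatic number). Then for any two distinct vertices u, v of H, there exist both a u–v path of odd length and a u–v path of even length in H. -/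
/-!
Vertex-criticality makes `H` 2-connected: if `H - w` separated `x` from `y`, colouring the
component of `x` in `H - w` as in `H - y` and all other vertices as in `H - x`, with two colours
swapped so that both colourings agree at `w`, would colour `H` with `d - 1` colours. As `d ≥ 3`,
`H` also contains an odd cycle `C`. Adding one vertex joined to `u` and `v` and another joined to
all of `C` keeps the graph 2-connected, so by Whitney's theorem the two new vertices lie on a
common cycle; its two arcs give disjoint walks from `u` and from `v` to `C`. Cut at their first
vertices on `C`, these close up along either arc of `C` into two `u`–`v` paths, whose lengths
have different parity because the two arcs together have odd length.
-/

namespace SimpleGraph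

variable {V : Type*} {G : SimpleGraph V}

namespace Walk

theorem IsPath.append {u v w : V} {p : G.Walk u v} {q : G.Walk v w} (hp : p.IsPath)
    (hq : q.IsPath) (hpq : ∀ z ∈ p.support, z ∈ q.support → z = v) : (p.append q).IsPath := by
  rw [isPath_def, support_append]
  refine hp.support_nodup.append hq.support_nodup.tail fun z hzp hzq => ?_
  have hv : v ∉ q.support.tail := by
    have := hq.support_nodup
    rw [← q.cons_tail_support, List.nodup_cons] at this
    exact this.1
  exact hv (hpq z hzp (List.mem_of_mem_tail hzq) ▸ hzq)

theorem IsPath.append_append {S : Set V} {u x y v : V} {p : G.Walk u x}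
    {m : G.Walk x y} {q : G.Walk y v} (hp : p.IsPath) (hm : m.IsPath) (hq : q.IsPath)
    (hpS : ∀ z ∈ p.support, z ∈ S → z = x) (hmS : ∀ z ∈ m.support, z ∈ S)
    (hqS : ∀ z ∈ q.support, z ∈ S → z = y) (hpq : ∀ z ∈ p.support, z ∉ q.support) :
    (p.append (m.append q)).IsPath := by
  refine hp.append (hm.append hq fun z hzm hzq => hqS z hzq (hmS z hzm)) fun z hzp hz => ?_
  rcases (mem_support_append_iff ..).mp hz with hzm | hzq
  · exact hpS z hzp (hmS z hzm)
  · exact absurd hzq (hpq z hzp)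

theorem exists_isPath_first_mem {S : Set V} {a b : V} (p : G.Walk a b) (hb : b ∈ S) :
    ∃ z ∈ S, ∃ q : G.Walk a z, q.IsPath ∧ q.support ⊆ p.support ∧
      ∀ y ∈ q.support, y ∈ S → y = z := by
  classical
  suffices ∃ z ∈ S, ∃ q : G.Walk a z, q.support ⊆ p.support ∧
      ∀ y ∈ q.support, y ∈ S → y = z by
    obtain ⟨z, hz, q, hsub, hfirst⟩ := this
    exact ⟨z, hz, q.bypass, q.bypass_isPath, List.Subset.trans q.support_bypass_subset_support hsub,
      fun y hy => hfirst y (q.support_bypass_subset_support hy)⟩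
  induction p with
  | nil => exact ⟨_, hb, nil, by simp, by simp⟩
  | @cons a _ _ h p ih =>
    by_cases ha : a ∈ S
    · exact ⟨a, ha, nil, by simp, by simp⟩
    obtain ⟨z, hz, q, hsub, hfirst⟩ := ih hb
    refine ⟨z, hz, cons h q, by simpa using List.subset_cons_of_subset _ hsub, ?_⟩
    rintro y hy hyS
    rcases List.mem_cons.mp (support_cons h q ▸ hy) with rfl | hy
    · exact absurd hyS ha
    · exact hfirst y hy hyS

theorem IsCycle.exists_append_of_mem {a x y : V} {c : G.Walk a a} (hc : c.IsCycle)
    (hx : x ∈ c.support) (hy : y ∈ c.support) :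
    ∃ (p : G.Walk x y) (q : G.Walk y x), (p.append q).IsCycle ∧
      (p.append q).length = c.length ∧ ∀ z, z ∈ (p.append q).support ↔ z ∈ c.support := by
  classical
  have hy' : y ∈ (c.rotate x hx).support := (c.mem_support_rotate_iff x hx).mpr hy
  refine ⟨(c.rotate x hx).takeUntil y hy', (c.rotate x hx).dropUntil y hy', ?_⟩
  rw [take_spec _ hy']
  exact ⟨hc.rotate hx, length_rotate .., fun z => c.mem_support_rotate_iff x hx⟩

theorem IsCycle.isPath_of_append {x y : V} {p : G.Walk x y} {q : G.Walk y x}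
    (hc : (p.append q).IsCycle) (hxy : x ≠ y) : p.IsPath ∧ q.IsPath :=
  ⟨hc.isPath_of_append_left (not_nil_of_ne hxy.symm),
    hc.isPath_of_append_right (not_nil_of_ne hxy)⟩

theorem IsCycle.eq_or_eq_of_mem_of_mem_append {x y z : V} {p : G.Walk x y} {q : G.Walk y x}
    (hc : (p.append q).IsCycle) (hzp : z ∈ p.support) (hzq : z ∈ q.support) : z = x ∨ z = y := by
  by_contra! h
  have hnodup := hc.support_nodup
  rw [tail_support_append, List.nodup_append] at hnodup
  refine hnodup.2.2 z ?_ z ?_ rfl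
  · rw [← p.cons_tail_support] at hzp
    exact (List.mem_cons.mp hzp).resolve_left h.1
  · rw [← q.cons_tail_support] at hzq
    exact (List.mem_cons.mp hzq).resolve_left h.2

theorem IsPath.cons_isCycle {v w : V} {p : G.Walk v w} (hp : p.IsPath) (h : G.Adj w v)
    (hlen : p.length ≠ 1) : (cons h p).IsCycle :=
  (cons_isCycle_iff p h).mpr
    ⟨hp, fun he => hlen (hp.length_eq_one_of_mem_edges (Sym2.eq_swap ▸ he))⟩

theorem exists_isCycle_odd_length {a : V} (c : G.Walk a a) (hc : Odd c.length) :
    ∃ (b : V) (c' : G.Walk b b), c'.IsCycle ∧ Odd c'.length := by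
  induction hn : c.length using Nat.strong_induction_on generalizing a with
  | _ n ih =>
  subst hn
  cases c with
  | nil => simp at hc
  | cons h q =>
    by_cases hq : q.IsPath
    · refine ⟨a, cons h q, hq.cons_isCycle h fun h1 => ?_, hc⟩
      simp only [length_cons, h1] at hc
      exact absurd hc (by decide)
    -- a closed subwalk `w` of `q` splits `cons h q` into two shorter closed walks
    obtain ⟨x, w, ⟨ru, rv, rfl⟩, hw⟩ : ∃ x, ∃ w : G.Walk x x, w.IsSubwalk q ∧ ¬ w.Nil := by
      simpa [isPath_iff_isSubwalk_imp_nil] using hq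
    set c₁ := cons h (ru.append rv)
    have hw₀ := not_nil_iff_lt_length.mp hw
    have hlen : (cons h ((ru.append w).append rv)).length = c₁.length + w.length := by
      simp only [c₁, length_cons, length_append]
      omega
    rw [hlen] at hc ih
    rcases Nat.even_or_odd w.length with hwe | hwo
    · exact ih _ (by omega) c₁ ((Nat.odd_add.mp hc).mpr hwe) rfl
    · exact ih _ (by simp only [c₁, length_cons]; omega) w hwo rfl

end Walk

open Walk

theorem Preconnected.exists_isCycle_odd_length_of_not_colorable_two
    (hG : G.Preconnected) (h2 : ¬ G.Colorable 2) :
    ∃ (a : V) (c : G.Walk a a), c.IsCycle ∧ Odd c.length := by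
  rcases isEmpty_or_nonempty V with hV | ⟨⟨r⟩⟩
  · exact absurd (Colorable.of_isEmpty 2) h2
  suffices ∃ x y, G.Adj x y ∧ G.dist r x % 2 = G.dist r y % 2 by
    obtain ⟨x, y, hxy, hpar⟩ := this
    obtain ⟨px, hpx⟩ := (hG r x).exists_walk_length_eq_dist
    obtain ⟨py, hpy⟩ := (hG r y).exists_walk_length_eq_dist
    refine (px.append (cons hxy py.reverse)).exists_isCycle_odd_length ?_
    simp only [length_append, length_cons, length_reverse, hpx, hpy, Nat.odd_iff]
    omega
  by_contra! hbip
  exact h2 ⟨Coloring.mk (fun z => ⟨G.dist r z % 2, Nat.mod_lt _ two_pos⟩)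
    fun hxy heq => hbip _ _ hxy (Fin.mk.inj_iff.mp heq)⟩

structure IsTwoConnected (G : SimpleGraph V) : Prop where
  exists_ne_ne (a b : V) : ∃ c, c ≠ a ∧ c ≠ b
  exists_walk_avoiding ⦃w a b : V⦄ : a ≠ w → b ≠ w → ∃ p : G.Walk a b, w ∉ p.support

namespace IsTwoConnected

variable (hG : G.IsTwoConnected)
include hG

theorem preconnected : G.Preconnected := fun a b => by
  obtain ⟨c, hca, hcb⟩ := hG.exists_ne_ne a b
  obtain ⟨p, -⟩ := hG.exists_walk_avoiding hca.symm hcb.symm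
  exact p.reachable

theorem exists_adj_ne {u v : V} (huv : u ≠ v) : ∃ x, G.Adj v x ∧ x ≠ u := by
  obtain ⟨c, hcu, hcv⟩ := hG.exists_ne_ne u v
  obtain ⟨p, hp⟩ := hG.exists_walk_avoiding huv.symm hcu
  have hp' : ¬ p.Nil := not_nil_of_ne hcv.symm
  exact ⟨p.snd, p.adj_snd hp', fun h => hp (h ▸ p.getVert_mem_support 1)⟩

theorem exists_isCycle_of_adj {u v : V} (huv : G.Adj u v) :
    ∃ (a : V) (c : G.Walk a a), c.IsCycle ∧ u ∈ c.support ∧ v ∈ c.support := by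
  classical
  obtain ⟨x, hvx, hxu⟩ := hG.exists_adj_ne huv.ne
  obtain ⟨q, hq⟩ := hG.exists_walk_avoiding huv.ne hvx.ne'
  have hvq : v ∉ q.bypass.support := fun h => hq (q.support_bypass_subset_support h)
  have hlen : q.bypass.length ≠ 0 := fun h => hxu (eq_of_length_eq_zero h).symm
  refine ⟨v, cons huv.symm (q.bypass.concat hvx.symm), ?_, by simp, by simp⟩
  exact (q.bypass_isPath.concat hvq _).cons_isCycle _ (by simpa using hlen)

theorem exists_isCycle_of_adj_of_isCycle {a u u' v : V} {C : G.Walk a a} (hC : C.IsCycle)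
    (hu'C : u' ∈ C.support) (hvC : v ∈ C.support) (huu' : G.Adj u u') (hu'v : u' ≠ v) :
    ∃ (b : V) (c : G.Walk b b), c.IsCycle ∧ u ∈ c.support ∧ v ∈ c.support := by
  by_cases huC : u ∈ C.support
  · exact ⟨a, C, hC, huC, hvC⟩
  obtain ⟨R, hR⟩ := hG.exists_walk_avoiding huu'.ne hu'v.symm
  obtain ⟨z, hzC, R', hR', hR'R, hR'C⟩ := R.exists_isPath_first_mem (S := {x | x ∈ C.support}) hvC
  have hzu' : z ≠ u' := fun h => hR (hR'R (h ▸ R'.end_mem_support))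
  obtain ⟨T, B, hTB, -, hTBC⟩ := hC.exists_append_of_mem hu'C hzC
  obtain ⟨hT, hB⟩ := hTB.isPath_of_append hzu'.symm
  obtain ⟨P, hP, hPC, hvP⟩ : ∃ P : G.Walk z u', P.IsPath ∧ (∀ x ∈ P.support, x ∈ C.support) ∧
      v ∈ P.support := by
    have hmem : ∀ x, x ∈ T.support ∨ x ∈ B.support ↔ x ∈ C.support := by
      simp [← hTBC, mem_support_append_iff]
    rcases (hmem v).mpr hvC with hv | hv
    · exact ⟨T.reverse, hT.reverse, fun x hx => (hmem x).mp (.inl (by simpa using hx)),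
        by simpa using hv⟩
    · exact ⟨B, hB, fun x hx => (hmem x).mp (.inr hx), hv⟩
  have huz : u ≠ z := fun h => huC (h ▸ hzC)
  have hlen : (R'.append P).length ≠ 1 := by
    have : R'.length ≠ 0 := fun h => huz (eq_of_length_eq_zero h)
    have : P.length ≠ 0 := fun h => hzu' (eq_of_length_eq_zero h)
    simp only [length_append]
    omega
  refine ⟨u', cons huu'.symm (R'.append P), ?_, by simp, by simp [hvP]⟩
  exact (hR'.append hP fun x hx hxP => hR'C x hx (hPC x hxP)).cons_isCycle _ hlen

theorem exists_isCycle_mem_support {u v : V} (huv : u ≠ v) :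
    ∃ (a : V) (c : G.Walk a a), c.IsCycle ∧ u ∈ c.support ∧ v ∈ c.support := by
  obtain ⟨p⟩ := hG.preconnected u v
  induction p with
  | nil => exact absurd rfl huv
  | @cons u u' v h p ih =>
    by_cases hu'v : u' = v
    · subst hu'v
      exact hG.exists_isCycle_of_adj h
    obtain ⟨a, C, hC, hu'C, hvC⟩ := ih hu'v
    exact hG.exists_isCycle_of_adj_of_isCycle hC hu'C hvC h hu'v

end IsTwoConnected

def addVertex (G : SimpleGraph V) (S : Set V) : SimpleGraph (Option V) where
  Adj
    | some a, some b => G.Adj a b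
    | some a, none => a ∈ S
    | none, some b => b ∈ S
    | none, none => False
  symm := ⟨by
    rintro (_ | a) (_ | b) h
    exacts [h, h, h, h.symm]⟩
  loopless := ⟨by
    rintro (_ | a) h
    exacts [h, G.irrefl h]⟩

section addVertex

variable {S : Set V}

theorem exists_addVertex_walk {a b : V} (p : G.Walk a b) :
    ∃ q : (G.addVertex S).Walk (some a) (some b), q.support = p.support.map some := by
  induction p with
  | nil => exact ⟨nil, rfl⟩
  | @cons a a' b h p ih =>
    obtain ⟨q, hq⟩ := ih
    exact ⟨cons (show (G.addVertex S).Adj (some a) (some a') from h) q, by simp [hq]⟩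

theorem exists_walk_of_none_notMem {a b : V} (p : (G.addVertex S).Walk (some a) (some b))
    (hp : none ∉ p.support) : ∃ q : G.Walk a b, q.support.map some = p.support := by
  suffices ∀ {x y : Option V} (p : (G.addVertex S).Walk x y), none ∉ p.support →
      ∀ a b, x = some a → y = some b → ∃ q : G.Walk a b, q.support.map some = p.support from
    this p hp a b rfl rfl
  intro x y p
  induction p with
  | nil =>
    rintro - a b rfl hb
    obtain rfl := Option.some_injective _ hb
    exact ⟨nil, rfl⟩
  | @cons x x' y h p ih =>
    rintro hp a b rfl rfl
    cases x' with
    | none => simp at hp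
    | some a' =>
      have h' : G.Adj a a' := h
      obtain ⟨q, hq⟩ := ih (by simp_all) a' b rfl rfl
      exact ⟨cons h' q, by simp [hq]⟩

theorem Walk.IsPath.exists_isPath_of_addVertex {b : V}
    {p : (G.addVertex S).Walk none (some b)} (hp : p.IsPath) :
    ∃ a ∈ S, ∃ q : G.Walk a b, q.IsPath ∧ ∀ x ∈ q.support, some x ∈ p.support := by
  cases p with
  | @cons _ x _ h p =>
    cases x with
    | none => exact absurd h (G.addVertex S).irrefl
    | some a =>
      obtain ⟨q, hq⟩ := exists_walk_of_none_notMem p ((cons_isPath_iff h p).mp hp).2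
      refine ⟨a, h, q, ?_, fun x hx => ?_⟩
      · rw [isPath_def]
        exact (hq ▸ hp.of_cons.support_nodup).of_map
      · simp [← hq, hx]

theorem IsTwoConnected.addVertex (hG : G.IsTwoConnected) {s t : V} (hs : s ∈ S) (ht : t ∈ S)
    (hst : s ≠ t) : (G.addVertex S).IsTwoConnected where
  exists_ne_ne a b := by
    obtain ⟨c, hca, hcb⟩ := hG.exists_ne_ne (a.getD s) (b.getD s)
    exact ⟨some c, by rintro rfl; exact hca rfl, by rintro rfl; exact hcb rfl⟩
  exists_walk_avoiding := by
    suffices ∀ w, ∃ t, ∀ a, a ≠ w → ∃ p : (G.addVertex S).Walk a t, w ∉ p.support by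
      intro w a b ha hb
      obtain ⟨t, ht⟩ := this w
      obtain ⟨p, hp⟩ := ht a ha
      obtain ⟨q, hq⟩ := ht b hb
      exact ⟨p.append q.reverse, by simp [mem_support_append_iff, hp, hq]⟩
    rintro (_ | w)
    · refine ⟨some s, ?_⟩
      rintro (_ | a) ha
      · exact absurd rfl ha
      obtain ⟨q, hq⟩ := exists_addVertex_walk (S := S) (hG.preconnected a s).some
      exact ⟨q, by simp [hq]⟩
    · obtain ⟨r, hrS, hrw⟩ : ∃ r ∈ S, r ≠ w := by
        by_cases h : s = w
        · exact ⟨t, ht, h ▸ hst.symm⟩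
        · exact ⟨s, hs, h⟩
      refine ⟨some r, ?_⟩
      rintro (_ | a) ha
      · exact ⟨cons (show (G.addVertex S).Adj none (some r) from hrS) nil, by simp [hrw.symm]⟩
      obtain ⟨p, hp⟩ := hG.exists_walk_avoiding (fun h => ha (congrArg some h)) hrw
      obtain ⟨q, hq⟩ := exists_addVertex_walk (S := S) p
      exact ⟨q, by simpa [hq] using hp⟩

end addVertex

theorem IsTwoConnected.exists_disjoint_walks (hG : G.IsTwoConnected) {S : Set V} {u v s t : V}
    (huv : u ≠ v) (hs : s ∈ S) (ht : t ∈ S) (hst : s ≠ t) :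
    ∃ x ∈ S, ∃ y ∈ S, ∃ (p : G.Walk u x) (q : G.Walk v y), ∀ z ∈ p.support, z ∉ q.support := by
  -- `some none` is joined to `u` and `v`, and `none` to all of `S`
  let G₂ := (G.addVertex {u, v}).addVertex (some '' S)
  have hG₂ : G₂.IsTwoConnected :=
    (hG.addVertex (by simp) (by simp) huv).addVertex (Set.mem_image_of_mem _ hs)
      (Set.mem_image_of_mem _ ht) (by simpa using hst)
  have peel : ∀ P : G₂.Walk none (some none), P.IsPath → ∃ a ∈ ({u, v} : Set V), ∃ c ∈ S,
      ∃ q : G.Walk a c, ∀ x ∈ q.support, some (some x) ∈ P.support := by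
    intro P hP
    obtain ⟨_, ⟨c, hc, rfl⟩, q₁, hq₁, hq₁P⟩ := hP.exists_isPath_of_addVertex
    obtain ⟨a, ha, q, -, hqq₁⟩ := hq₁.reverse.exists_isPath_of_addVertex
    exact ⟨a, ha, c, hc, q, fun x hx => hq₁P _ (by simpa using hqq₁ x hx)⟩
  obtain ⟨_, K, hK, hzK, hz'K⟩ := hG₂.exists_isCycle_mem_support (u := some none) (v := none)
    (by simp)
  obtain ⟨T, B, hTB, -, -⟩ := hK.exists_append_of_mem hzK hz'K
  obtain ⟨hT, hB⟩ := hTB.isPath_of_append (by simp)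
  obtain ⟨a₁, ha₁, c₁, hc₁, q₁, hq₁T⟩ := peel T.reverse hT.reverse
  obtain ⟨a₂, ha₂, c₂, hc₂, q₂, hq₂B⟩ := peel B hB
  have hdisj : ∀ z ∈ q₁.support, z ∉ q₂.support := fun z h₁ h₂ => by
    simpa using hTB.eq_or_eq_of_mem_of_mem_append (by simpa using hq₁T z h₁) (hq₂B z h₂)
  have ha₁₂ : a₁ ≠ a₂ := fun h => hdisj a₁ q₁.start_mem_support (h ▸ q₂.start_mem_support)
  simp only [Set.mem_insert_iff, Set.mem_singleton_iff] at ha₁ ha₂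
  rcases ha₁ with rfl | rfl <;> rcases ha₂ with rfl | rfl
  · exact absurd rfl ha₁₂
  · exact ⟨c₁, hc₁, c₂, hc₂, q₁, q₂, hdisj⟩
  · exact ⟨c₂, hc₂, c₁, hc₁, q₂, q₁, fun z h₂ h₁ => hdisj z h₁ h₂⟩
  · exact absurd rfl ha₁₂

theorem exists_isPath_odd_even_of_odd_add {u v : V} {p q : G.Walk u v} (hp : p.IsPath)
    (hq : q.IsPath) (hpq : Odd (p.length + q.length)) :
    (∃ r : G.Walk u v, r.IsPath ∧ Odd r.length) ∧ (∃ r : G.Walk u v, r.IsPath ∧ Even r.length) := by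
  rcases Nat.even_or_odd p.length with he | ho
  · exact ⟨⟨q, hq, (Nat.odd_add'.mp hpq).mpr he⟩, p, hp, he⟩
  · exact ⟨⟨p, hp, ho⟩, q, hq, (Nat.odd_add.mp hpq).mp ho⟩

theorem Walk.IsCycle.exists_isPath_odd_even {a u v x y : V} {C : G.Walk a a} (hC : C.IsCycle)
    (hodd : Odd C.length) (hx : x ∈ C.support) (hy : y ∈ C.support) (pu : G.Walk u x)
    (pv : G.Walk v y) (hdisj : ∀ z ∈ pu.support, z ∉ pv.support) :
    (∃ r : G.Walk u v, r.IsPath ∧ Odd r.length) ∧ (∃ r : G.Walk u v, r.IsPath ∧ Even r.length) := by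
  obtain ⟨x', hx', p, hp, hpu, hpC⟩ := pu.exists_isPath_first_mem (S := {z | z ∈ C.support}) hx
  obtain ⟨y', hy', q, hq, hqv, hqC⟩ := pv.exists_isPath_first_mem (S := {z | z ∈ C.support}) hy
  have hpq : ∀ z ∈ p.support, z ∉ q.support := fun z h₁ h₂ => hdisj z (hpu h₁) (hqv h₂)
  have hx'y' : x' ≠ y' := fun h => hpq x' p.end_mem_support (h ▸ q.end_mem_support)
  obtain ⟨T, B, hTB, hlen, hTBC⟩ := hC.exists_append_of_mem hx' hy'
  obtain ⟨hT, hB⟩ := hTB.isPath_of_append hx'y'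
  have hq' : ∀ z ∈ q.reverse.support, z ∈ C.support → z = y' := by simpa using hqC
  have hpq' : ∀ z ∈ p.support, z ∉ q.reverse.support := by simpa using hpq
  refine exists_isPath_odd_even_of_odd_add
    (hp.append_append (S := {z | z ∈ C.support}) hT hq.reverse hpC
      (fun z hz => (hTBC z).mp (by simp [mem_support_append_iff, hz])) hq' hpq')
    (hp.append_append (S := {z | z ∈ C.support}) hB.reverse hq.reverse hpC
      (fun z hz => (hTBC z).mp (by simp_all [mem_support_append_iff])) hq' hpq') ?_
  simp only [length_append, length_reverse] at hlen ⊢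
  rw [show p.length + (T.length + q.length) + (p.length + (B.length + q.length)) =
    C.length + 2 * (p.length + q.length) by omega]
  exact hodd.add_even (even_two_mul _)

theorem exists_ne_ne_of_not_colorable_two (h : ¬ G.Colorable 2) (a b : V) :
    ∃ c, c ≠ a ∧ c ≠ b := by
  classical
  by_contra! hab
  refine h ⟨Coloring.mk (fun z => if z = a then 0 else 1) fun {p q} hpq heq => hpq.ne ?_⟩
  by_cases hp : p = a <;> by_cases hq : q = a
  · rw [hp, hq]
  · simp [hp, hq] at heq
  · simp [hp, hq] at heq
  · rw [hab p hp, hab q hq]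

theorem exists_walk_avoiding_of_colorable_induce {n : ℕ} (hn : ¬ G.Colorable n)
    (hcol : ∀ w, (G.induce {z | z ≠ w}).Colorable n) {w x y : V} (hx : x ≠ w) (hy : y ≠ w) :
    ∃ p : G.Walk x y, w ∉ p.support := by
  classical
  by_contra! hsep
  set A : Set V := {z | ∃ p : G.Walk x z, w ∉ p.support}
  have hxA : x ∈ A := ⟨nil, by simpa using hx.symm⟩
  have hyA : y ∉ A := fun ⟨p, hp⟩ => hp (hsep p)
  have hwA : w ∉ A := fun ⟨p, hp⟩ => hp p.end_mem_support
  have hA : ∀ a ∈ A, ∀ b, G.Adj a b → b ∉ A → b = w := by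
    rintro a ⟨p, hp⟩ b hab hbA
    by_contra hbw
    exact hbA ⟨p.concat hab, by simp [support_concat, hp, Ne.symm hbw]⟩
  obtain ⟨c₁⟩ := hcol y
  obtain ⟨c₂⟩ := hcol x
  let σ := Equiv.swap (c₂ ⟨w, hx.symm⟩) (c₁ ⟨w, hy.symm⟩)
  let f : V → Fin n := fun z =>
    if hz : z ∈ A then c₁ ⟨z, ne_of_mem_of_not_mem hz hyA⟩
    else σ (c₂ ⟨z, by rintro rfl; exact hz hxA⟩)
  have hc₁ : ∀ {a b} (ha : a ≠ y) (hb : b ≠ y), G.Adj a b → c₁ ⟨a, ha⟩ ≠ c₁ ⟨b, hb⟩ :=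
    fun _ _ hab => c₁.valid hab
  have hc₂ : ∀ {a b} (ha : a ≠ x) (hb : b ≠ x), G.Adj a b → c₂ ⟨a, ha⟩ ≠ c₂ ⟨b, hb⟩ :=
    fun _ _ hab => c₂.valid hab
  have hf : ∀ a b, G.Adj a b → a ∈ A → f a ≠ f b := by
    intro a b hab ha
    by_cases hb : b ∈ A
    · simpa [f, ha, hb] using hc₁ _ _ hab
    · obtain rfl := hA a ha b hab hb
      simpa [f, ha, hb, σ] using hc₁ _ _ hab
  refine hn ⟨Coloring.mk f fun {a b} hab => ?_⟩
  by_cases ha : a ∈ A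
  · exact hf a b hab ha
  by_cases hb : b ∈ A
  · exact (hf b a hab.symm hb).symm
  simpa [f, ha, hb] using hc₂ _ _ hab

theorem IsTwoConnected.of_not_colorable {n : ℕ} (hn : ¬ G.Colorable n) (h2 : 2 ≤ n)
    (hcol : ∀ w, (G.induce {z | z ≠ w}).Colorable n) : G.IsTwoConnected where
  exists_ne_ne := exists_ne_ne_of_not_colorable_two fun h => hn (h.mono h2)
  exists_walk_avoiding _ _ _ := exists_walk_avoiding_of_colorable_induce hn hcol

end SimpleGraph

theorem critical_odd_even_paths_general {V : Type*} (H : SimpleGraph V)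
    (d : ℕ) (hd : 3 ≤ d) (hχ : H.chromaticNumber = (d : ℕ∞))
    (hcrit : ∀ v : V, (H.induce {w | w ≠ v}).chromaticNumber < (d : ℕ∞))
    (u v : V) (huv : u ≠ v) :
    (∃ p : H.Walk u v, p.IsPath ∧ Odd p.length) ∧
    (∃ p : H.Walk u v, p.IsPath ∧ Even p.length) := by
  have hn : ¬ H.Colorable (d - 1) := by
    rw [← SimpleGraph.chromaticNumber_le_iff_colorable, hχ, Nat.cast_le]
    omega
  have hcol : ∀ w, (H.induce {z | z ≠ w}).Colorable (d - 1) := fun w => by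
    refine SimpleGraph.chromaticNumber_le_iff_colorable.mp (Order.le_of_lt_add_one ?_)
    rw [← Nat.cast_add_one, Nat.sub_add_cancel (by omega)]
    exact hcrit w
  have hH : H.IsTwoConnected := .of_not_colorable hn (by omega) hcol
  obtain ⟨a, C, hC, hodd⟩ :=
    hH.preconnected.exists_isCycle_odd_length_of_not_colorable_two fun h => hn (h.mono (by omega))
  obtain ⟨x, hx, y, hy, pu, pv, hdisj⟩ := hH.exists_disjoint_walks (S := {z | z ∈ C.support}) huv
    C.start_mem_support (C.getVert_mem_support 1) (C.adj_snd hC.not_nil).ne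
  exact hC.exists_isPath_odd_even hodd hx hy pu pv hdisj

/-- In a vertex-critical `d`-chromatic graph with `d ≥ 3`, any two distinct vertices
are joined by a path of odd length and by a path of even length. -/
theorem critical_odd_even_paths {V : Type*} [Fintype V] (H : SimpleGraph V)
    (d : ℕ) (hd : 3 ≤ d) (hχ : H.chromaticNumber = (d : ℕ∞))
    (hcrit : ∀ v : V, (H.induce {w | w ≠ v}).chromaticNumber < (d : ℕ∞))
    (u v : V) (huv : u ≠ v) :
    (∃ p : H.Walk u v, p.IsPath ∧ Odd p.length) ∧
    (∃ p : H.Walk u v, p.IsPath ∧ Even p.length) :=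
  critical_odd_even_paths_general H d hd hχ hcrit u v huv
end

section
/- Let a > 0 and 1/2 < b < 1 be real numbers, and let H be a graph such that every H-free graph on n vertices has at most a·n^{2b} edges, for every n. Then for any H-free graph G of minimum degree at least 18·a·d (d > 0 real) and any set X of vertices of G with |X| ≤ d^{1/(2b-1)}, the open neighborhood satisfies |∂X| > 2|X|. -/
/-!
Suppose `|∂X| ≤ 2|X|` and put `S = X ∪ ∂X`, so `|S| ≤ 3|X|`. The induced graph `G[S]` is `H`-free
and keeps every edge at `X`, so it has at least `|X|·δ(G)/2 ≥ 9ad|X|` edges. On the other hand the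
Turán-type bound gives at most `a(3|X|)^{2b} = 9a·3^{2b-2}·|X|·|X|^{2b-1}` edges, which is less than
`9ad|X|` because `2b < 2` and `|X|^{2b-1} ≤ d`.
-/

/-- `G` contains no subgraph isomorphic to `H`. -/
def HFree {W V : Type*} (H : SimpleGraph W) (G : SimpleGraph V) : Prop :=
  ¬∃ f : H →g G, Function.Injective f

open Finset

theorem hFree_iff_free {W V : Type*} {H : SimpleGraph W} {G : SimpleGraph V} :
    HFree H G ↔ H.Free G :=
  ⟨fun h ⟨f⟩ => h ⟨f.toHom, f.injective⟩, fun h ⟨f, hf⟩ => h ⟨f.toCopy hf⟩⟩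

namespace SimpleGraph

variable {V W : Type*} {H : SimpleGraph W}

theorem Free.induce {G : SimpleGraph V} (hG : H.Free G) (s : Set V) : H.Free (G.induce s) :=
  fun h => hG (h.trans ⟨Copy.induce G s⟩)

theorem Iso.ncard_edgeSet_eq {V' : Type*} {G : SimpleGraph V} {G' : SimpleGraph V'} (e : G ≃g G') :
    G.edgeSet.ncard = G'.edgeSet.ncard :=
  Nat.card_congr e.mapEdgeSet

theorem ncard_edgeSet_le_of_forall_fin {f : ℕ → ℝ}
    (hf : ∀ (n : ℕ) (F : SimpleGraph (Fin n)), H.Free F → (F.edgeSet.ncard : ℝ) ≤ f n)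
    [Fintype V] {G : SimpleGraph V} (hG : H.Free G) :
    (G.edgeSet.ncard : ℝ) ≤ f (Fintype.card V) := by
  let e := G.overFinIso rfl
  rw [e.ncard_edgeSet_eq]
  exact hf _ _ ((free_congr_right e).1 hG)

theorem sum_degree_le_two_mul_ncard_edgeSet_induce [Fintype V] (G : SimpleGraph V)
    [DecidableRel G.Adj] {X : Finset V} {s : Set V} (hXs : ↑X ⊆ s)
    (hs : ∀ x ∈ X, G.neighborSet x ⊆ s) :
    ∑ x ∈ X, G.degree x ≤ 2 * (G.induce s).edgeSet.ncard := by
  classical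
  rw [← coe_edgeFinset, Set.ncard_coe_finset, ← sum_degrees_eq_twice_card_edges]
  calc ∑ x ∈ X, G.degree x
      = ∑ v ∈ X.subtype (· ∈ s), (G.induce s).degree v := by
        rw [← sum_subtype_of_mem _ fun x hx => hXs hx]
        exact sum_congr rfl fun v hv =>
          (degree_induce_of_neighborSet_subset (hs v (by simpa using hv))).symm
    _ ≤ ∑ v, (G.induce s).degree v := sum_le_univ_sum_of_nonneg fun _ => Nat.zero_le _

end SimpleGraph

theorem rpow_two_mul_lt_nine_mul {b x d m : ℝ} (hb1 : 1 / 2 < b) (hb2 : b < 1) (hx : 0 < x)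
    (hd : 0 ≤ d) (hxd : x ≤ d ^ (1 / (2 * b - 1))) (hm0 : 0 ≤ m) (hm : m ≤ 3 * x) :
    m ^ (2 * b) < 9 * x * d := by
  have hc : 0 < 2 * b - 1 := by linarith
  have hxd' : x ^ (2 * b - 1) ≤ d :=
    (Real.le_rpow_inv_iff_of_pos hx.le hd hc).1 (by rwa [← one_div])
  calc m ^ (2 * b) ≤ (3 * x) ^ (2 * b) := Real.rpow_le_rpow hm0 hm (by linarith)
    _ = 3 ^ (2 * b) * (x * x ^ (2 * b - 1)) := by
        rw [Real.mul_rpow (by norm_num) hx.le, ← Real.rpow_one_add' hx.le (by linarith)]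
        ring_nf
    _ < 3 ^ (2 : ℝ) * (x * x ^ (2 * b - 1)) := by
        gcongr
        · exact Real.rpow_lt_rpow_of_exponent_lt (by norm_num) (by linarith)
    _ ≤ 9 * x * d := by
        rw [mul_assoc]
        norm_num
        gcongr

theorem HFree_expansion_general {W : Type*} (H : SimpleGraph W)
    (a b : ℝ) (ha : 0 < a) (hb1 : 1 / 2 < b) (hb2 : b < 1)
    (hTuran : ∀ (n : ℕ) (F : SimpleGraph (Fin n)), HFree H F →
      (F.edgeSet.ncard : ℝ) ≤ a * (n : ℝ) ^ (2 * b))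
    {V : Type*} [Fintype V] [DecidableEq V]
    (G : SimpleGraph V) [DecidableRel G.Adj] (hGfree : HFree H G)
    (d : ℝ) (hd : 0 < d) (hmin : 18 * a * d ≤ (G.minDegree : ℝ))
    (X : Finset V) (hX : X.Nonempty)
    (hXcard : (X.card : ℝ) ≤ d ^ (1 / (2 * b - 1))) :
    2 * X.card < (Finset.univ.filter fun y => y ∉ X ∧ ∃ x ∈ X, G.Adj x y).card := by
  set N := univ.filter fun y => y ∉ X ∧ ∃ x ∈ X, G.Adj x y
  by_contra! hN
  have hXS : ↑X ⊆ (↑(X ∪ N) : Set V) := by simp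
  have hNS : ∀ x ∈ X, G.neighborSet x ⊆ ↑(X ∪ N) := by
    intro x hx y hxy
    by_cases hy : y ∈ X <;> simp_all [N]
    exact ⟨x, hx, hxy⟩
  have hS : #(X ∪ N) ≤ 3 * #X := by grw [card_union_le]; omega
  have hdeg : #X * G.minDegree ≤ 2 * (G.induce ↑(X ∪ N)).edgeSet.ncard :=
    (card_nsmul_le_sum _ _ _ fun x _ => G.minDegree_le_degree x).trans
      (G.sum_degree_le_two_mul_ncard_edgeSet_induce hXS hNS)
  have hedges : ((G.induce ↑(X ∪ N)).edgeSet.ncard : ℝ) ≤ a * #(X ∪ N) ^ (2 * b) := by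
    simpa using SimpleGraph.ncard_edgeSet_le_of_forall_fin (G := G.induce ↑(X ∪ N))
      (fun n F hF => hTuran n F (hFree_iff_free.2 hF)) ((hFree_iff_free.1 hGfree).induce _)
  have hpow : (#(X ∪ N) : ℝ) ^ (2 * b) < 9 * #X * d :=
    rpow_two_mul_lt_nine_mul hb1 hb2 (by exact_mod_cast hX.card_pos) hd.le hXcard
      (Nat.cast_nonneg _) (by exact_mod_cast hS)
  have hdeg' : (#X : ℝ) * (18 * a * d) ≤ 2 * (G.induce ↑(X ∪ N)).edgeSet.ncard := by
    grw [hmin]; exact_mod_cast hdeg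
  linarith [mul_lt_mul_of_pos_left hpow ha]

/-- If every `H`-free graph on `n` vertices has at most `a·n^{2b}` edges, then every
`H`-free graph of minimum degree at least `18·a·d` expands: every nonempty vertex set
`X` with `|X| ≤ d^{1/(2b-1)}` satisfies `|∂X| > 2|X|`. -/
theorem HFree_expansion {W : Type*} [Fintype W] (H : SimpleGraph W)
    (a b : ℝ) (ha : 0 < a) (hb1 : 1 / 2 < b) (hb2 : b < 1)
    (hTuran : ∀ (n : ℕ) (F : SimpleGraph (Fin n)), HFree H F →
      (F.edgeSet.ncard : ℝ) ≤ a * (n : ℝ) ^ (2 * b))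
    {V : Type*} [Fintype V] [DecidableEq V] [Nonempty V]
    (G : SimpleGraph V) [DecidableRel G.Adj] (hGfree : HFree H G)
    (d : ℝ) (hd : 0 < d) (hmin : 18 * a * d ≤ (G.minDegree : ℝ))
    (X : Finset V) (hX : X.Nonempty)
    (hXcard : (X.card : ℝ) ≤ d ^ (1 / (2 * b - 1))) :
    2 * X.card < (Finset.univ.filter fun y => y ∉ X ∧ ∃ x ∈ X, G.Adj x y).card :=
  HFree_expansion_general H a b ha hb1 hb2 hTuran G hGfree d hd hmin X hX hXcard
end

section
/- Let G be a connected finite simple graph of average degree at least 2c, and let L_0, L_1, L_2, … be the distance levels from a fixed vertex (L_i is the set of vertices at distance exactly i). Then there exists an index i such that the subgraph of G induced by L_i ∪ L_{i+1} has average degree at least c, provided G is bipartite (so no edges lie within any single level L_i). -/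
/-!
In a bipartite graph the distance levels from a vertex `r` differ by exactly one along every
edge (shortest walks from `r` to the two ends of an edge have lengths of opposite parity), so each
edge lies in exactly one band `L_i ∪ L_{i+1}`, namely the one indexed by the lower of its two
levels. Summing over `i`, the bands contain all `e(G)` edges, while every vertex outside `L_0`
is counted in two bands and the vertices of `L_0 ∋ r` in one, giving strictly less than
`2|V|`. For `c > 0` some band therefore has `c |L_i ∪ L_{i+1}| < 2 e(G[L_i ∪ L_{i+1}])`; such a
band contains an edge, so it is nonempty.
-/

open Finset

namespace SimpleGraph

variable {V : Type*} {G : SimpleGraph V}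

lemma Colorable.dist_eq_dist_add_one_of_adj_of_reachable (hG : G.Colorable 2) (u : V) {v w : V}
    (hadj : G.Adj v w) (hreach : G.Reachable u v) :
    G.dist u v = G.dist u w + 1 ∨ G.dist u w = G.dist u v + 1 := by
  obtain ⟨col⟩ : Nonempty (G.Coloring Bool) := ⟨G.recolorOfEquiv finTwoEquiv hG.some⟩
  obtain ⟨p, hp⟩ := hreach.exists_walk_length_eq_dist
  obtain ⟨q, hq⟩ := (hreach.trans hadj.reachable).exists_walk_length_eq_dist
  have hpw := col.even_length_iff_congr (p.concat hadj)
  have hqw := col.even_length_iff_congr q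
  rw [Walk.length_concat, hp, Nat.even_add_one] at hpw
  rw [hq] at hqw
  have hne : G.dist u v ≠ G.dist u w := fun h => by rw [h] at hpw; tauto
  grind [Adj.diff_dist_adj]

def consecutiveLevels (f : V → ℕ) (i : ℕ) : Set V := {v | f v = i} ∪ {v | f v = i + 1}

def minLevel (f : V → ℕ) : Sym2 V → ℕ :=
  Sym2.lift ⟨fun v w => min (f v) (f w), fun _ _ => min_comm _ _⟩

@[simp]
lemma minLevel_mk (f : V → ℕ) (v w : V) : minLevel f s(v, w) = min (f v) (f w) := rfl

variable [Fintype V] {f : V → ℕ}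

lemma sum_ncard_consecutiveLevels {N : ℕ} (hN : ∀ v, f v < N) :
    ∑ i ∈ range N, (consecutiveLevels f i).ncard + #{v | f v = 0} = 2 * Fintype.card V := by
  classical
  have hlevels : ∀ M, N ≤ M → ∑ i ∈ range M, #{v | f v = i} = Fintype.card V := fun M hM =>
    (card_eq_sum_card_fiberwise fun v _ => mem_range.2 ((hN v).trans_le hM)).symm
  have hband : ∀ i, (consecutiveLevels f i).ncard = #{v | f v = i} + #{v | f v = i + 1} := by
    intro i
    rw [consecutiveLevels, Set.ncard_union_eq (Set.disjoint_left.2 fun v h h' => by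
      simp_all), Set.ncard_eq_toFinset_card', Set.ncard_eq_toFinset_card']
    simp
  simp only [hband, sum_add_distrib]
  rw [add_assoc, ← sum_range_succ' (fun i => #{v | f v = i}), hlevels N le_rfl,
    hlevels (N + 1) N.le_succ, two_mul]

lemma ncard_edgeSet_induce_consecutiveLevels [DecidableRel G.Adj]
    (hf : ∀ ⦃v w⦄, G.Adj v w → f v = f w + 1 ∨ f w = f v + 1) (i : ℕ) :
    (G.induce (consecutiveLevels f i)).edgeSet.ncard = #{e ∈ G.edgeFinset | minLevel f e = i} := by
  classical
  rw [← coe_edgeFinset, Set.ncard_coe_finset, ← card_map, map_edgeFinset_induce]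
  congr 1
  ext e
  induction e using Sym2.ind with
  | _ v w =>
    simp only [mem_inter, mem_filter, mem_edgeFinset, mem_edgeSet, mk_mem_sym2_iff,
      Set.mem_toFinset, minLevel_mk]
    simp only [consecutiveLevels, Set.mem_union, Set.mem_ofPred_eq]
    constructor
    · rintro ⟨hadj, hv, hw⟩
      have := hf hadj
      exact ⟨hadj, by omega⟩
    · rintro ⟨hadj, hmin⟩
      have := hf hadj
      exact ⟨hadj, by omega, by omega⟩

lemma sum_ncard_edgeSet_induce_consecutiveLevels
    (hf : ∀ ⦃v w⦄, G.Adj v w → f v = f w + 1 ∨ f w = f v + 1) {N : ℕ} (hN : ∀ v, f v < N) :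
    ∑ i ∈ range N, (G.induce (consecutiveLevels f i)).edgeSet.ncard = G.edgeSet.ncard := by
  classical
  simp only [ncard_edgeSet_induce_consecutiveLevels hf]
  rw [← coe_edgeFinset, Set.ncard_coe_finset]
  refine (card_eq_sum_card_fiberwise fun e _ => mem_range.2 ?_).symm
  induction e using Sym2.ind with
  | _ v w => exact (min_le_left _ _).trans_lt (hN v)

theorem exists_consecutiveLevels_dense
    (hf : ∀ ⦃v w⦄, G.Adj v w → f v = f w + 1 ∨ f w = f v + 1) {r : V} (hr : f r = 0) {c : ℝ}
    (hdeg : c * Fintype.card V ≤ G.edgeSet.ncard) :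
    ∃ i, (consecutiveLevels f i).Nonempty ∧
      c * (consecutiveLevels f i).ncard ≤ 2 * (G.induce (consecutiveLevels f i)).edgeSet.ncard := by
  have hr₀ : r ∈ consecutiveLevels f 0 := Or.inl hr
  rcases le_or_gt c 0 with hc | hc
  · exact ⟨0, ⟨r, hr₀⟩, (mul_nonpos_of_nonpos_of_nonneg hc (by positivity)).trans (by positivity)⟩
  set N := univ.sup f + 1
  have hN : ∀ v, f v < N := fun v => Nat.lt_succ_of_le (le_sup (mem_univ v))
  have hbottom : (0 : ℝ) < #{v | f v = 0} :=
    Nat.cast_pos.2 (card_pos.2 ⟨r, mem_filter.2 ⟨mem_univ r, hr⟩⟩)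
  have hsum : ∑ i ∈ range N, c * (consecutiveLevels f i).ncard
      < ∑ i ∈ range N, 2 * ((G.induce (consecutiveLevels f i)).edgeSet.ncard : ℝ) := by
    have hV := congrArg (Nat.cast (R := ℝ)) (sum_ncard_consecutiveLevels hN)
    have hE := congrArg (Nat.cast (R := ℝ)) (sum_ncard_edgeSet_induce_consecutiveLevels hf hN)
    push_cast at hV hE
    rw [← mul_sum, ← mul_sum, hE]
    nlinarith
  obtain ⟨i, -, hi⟩ := exists_lt_of_sum_lt hsum
  refine ⟨i, ?_, hi.le⟩
  have hedge : (G.induce (consecutiveLevels f i)).edgeSet.ncard ≠ 0 := by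
    intro h
    rw [h, Nat.cast_zero, mul_zero] at hi
    exact hi.not_ge (by positivity)
  obtain ⟨e, -⟩ := Set.nonempty_of_ncard_ne_zero hedge
  exact ⟨e.out.1, e.out.1.2⟩

end SimpleGraph

/-- In a connected bipartite graph of average degree at least `2c`, some pair of
consecutive distance levels from a fixed vertex induces a (nonempty) subgraph of
average degree at least `c`. -/
theorem consecutive_levels_dense {V : Type*} [Fintype V] (G : SimpleGraph V)
    (hconn : G.Connected) (hbip : G.Colorable 2) (c : ℝ) (r : V)
    (hdeg : 2 * c * (Fintype.card V : ℝ) ≤ 2 * (G.edgeSet.ncard : ℝ)) :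
    ∃ i : ℕ,
      ({v | G.dist r v = i} ∪ {v | G.dist r v = i + 1} : Set V).Nonempty ∧
      c * ((({v | G.dist r v = i} ∪ {v | G.dist r v = i + 1} : Set V)).ncard : ℝ) ≤
        2 * ((G.induce ({v | G.dist r v = i} ∪ {v | G.dist r v = i + 1})).edgeSet.ncard : ℝ) := by
  have hlevels : ∀ ⦃v w⦄, G.Adj v w →
      G.dist r v = G.dist r w + 1 ∨ G.dist r w = G.dist r v + 1 :=
    fun v _ hadj => hbip.dist_eq_dist_add_one_of_adj_of_reachable r hadj (hconn r v)
  exact SimpleGraph.exists_consecutiveLevels_dense hlevels SimpleGraph.dist_self (by linarith)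
end
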